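/- Let θ : ℝ⁴ → ℝ be smooth with coordinates (w, z, x, y), set F := θ_y, G := θ_x, f := θ_{yz} + θ_{xw} + θ_{xy}² − θ_{xx}θ_{yy}, and let Q = ∂_w∂_x + ∂_z∂_y − θ_{yy}∂_x² − θ_{xx}∂_y² + 2θ_{xy}∂_x∂_y. Then the pair (F, G) satisfies the system (sd_3rd), ∂_x(Q(F)) − ∂_y(Q(G)) = 0 and (∂_w − F_y∂_x + G_y∂_y)Q(G) + (∂_z + F_x∂_x − G_x∂_y)Q(F) = 0, if and only if θ satisfies the null-Kähler equation Q(f) = 0. Moreover the first equation of (sd_3rd) holds identically for this ansatz. -/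

import Mathlib

/-!
With `F = θ_y` and `G = θ_x`, the Leibniz rule and the symmetry of mixed partials give
`Q(θ_x) = ∂_x f` and `Q(θ_y) = ∂_y f`. The first equation of (sd_3rd) is then
`∂_x∂_y f − ∂_y∂_x f = 0`, and the left side of the second one becomes `Q(f)`.
-/

noncomputable section

/-- Partial derivative of `f` along the `i`-th coordinate direction on `ℝⁿ`.
Coordinates on `ℝ⁴` are `(w, z, x, y) = (0, 1, 2, 3)`. -/
def pd {n : ℕ} (i : Fin n) (f : (Fin n → ℝ) → ℝ) : (Fin n → ℝ) → ℝ :=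
  fun x => fderiv ℝ f x (Pi.single i 1)

/-- The operator `Q = ∂_w∂_x + ∂_z∂_y − θ_{yy}∂_x² − θ_{xx}∂_y² + 2θ_{xy}∂_x∂_y`
applied to `h`. -/
def Qth (θ h : (Fin 4 → ℝ) → ℝ) : (Fin 4 → ℝ) → ℝ :=
  fun x =>
    pd 0 (pd 2 h) x + pd 1 (pd 3 h) x - pd 3 (pd 3 θ) x * pd 2 (pd 2 h) x
      - pd 2 (pd 2 θ) x * pd 3 (pd 3 h) x
      + 2 * pd 2 (pd 3 θ) x * pd 2 (pd 3 h) x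

/-- The Plebański expression `f = θ_{yz} + θ_{xw} + θ_{xy}² − θ_{xx}θ_{yy}`. -/
def plebF (θ : (Fin 4 → ℝ) → ℝ) : (Fin 4 → ℝ) → ℝ :=
  fun x =>
    pd 1 (pd 3 θ) x + pd 0 (pd 2 θ) x + (pd 2 (pd 3 θ) x) ^ 2
      - pd 2 (pd 2 θ) x * pd 3 (pd 3 θ) x

section PartialDerivatives

variable {n : ℕ}

@[fun_prop]
lemma contDiff_pd (i : Fin n) {f : (Fin n → ℝ) → ℝ} (hf : ContDiff ℝ (⊤ : ℕ∞) f) :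
    ContDiff ℝ (⊤ : ℕ∞) (pd i f) :=
  (hf.fderiv_right (by exact_mod_cast le_refl _)).clm_apply contDiff_const

@[fun_prop]
lemma differentiable_pd (i : Fin n) {f : (Fin n → ℝ) → ℝ} (hf : ContDiff ℝ (⊤ : ℕ∞) f) :
    Differentiable ℝ (pd i f) :=
  (contDiff_pd i hf).differentiable (by simp)

lemma pd_pd_eq_fderiv_fderiv {f : (Fin n → ℝ) → ℝ} {x : Fin n → ℝ}
    (hf : DifferentiableAt ℝ (fderiv ℝ f) x) (i j : Fin n) :
    pd i (pd j f) x = fderiv ℝ (fderiv ℝ f) x (Pi.single i 1) (Pi.single j 1) := by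
  unfold pd
  rw [fderiv_clm_apply hf (differentiableAt_const _)]
  simp

lemma pd_comm (i j : Fin n) {f : (Fin n → ℝ) → ℝ} (hf : ContDiff ℝ 2 f) (x : Fin n → ℝ) :
    pd i (pd j f) x = pd j (pd i f) x := by
  have hdf : DifferentiableAt ℝ (fderiv ℝ f) x :=
    (hf.fderiv_right (m := 1) le_rfl).differentiable one_ne_zero x
  rw [pd_pd_eq_fderiv_fderiv hdf, pd_pd_eq_fderiv_fderiv hdf,
    (hf.contDiffAt.isSymmSndFDerivAt (by simp)).eq]

lemma pd_pd_comm (i j : Fin n) {f : (Fin n → ℝ) → ℝ} (hf : ContDiff ℝ (⊤ : ℕ∞) f) :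
    pd i (pd j f) = pd j (pd i f) :=
  funext (pd_comm i j (hf.of_le (WithTop.coe_le_coe.2 le_top)))

lemma pd_fun_add (i : Fin n) {f g : (Fin n → ℝ) → ℝ} {x : Fin n → ℝ}
    (hf : DifferentiableAt ℝ f x) (hg : DifferentiableAt ℝ g x) :
    pd i (fun y => f y + g y) x = pd i f x + pd i g x := by
  simp [pd, fderiv_fun_add hf hg]

lemma pd_fun_sub (i : Fin n) {f g : (Fin n → ℝ) → ℝ} {x : Fin n → ℝ}
    (hf : DifferentiableAt ℝ f x) (hg : DifferentiableAt ℝ g x) :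
    pd i (fun y => f y - g y) x = pd i f x - pd i g x := by
  simp [pd, fderiv_fun_sub hf hg]

lemma pd_fun_mul (i : Fin n) {f g : (Fin n → ℝ) → ℝ} {x : Fin n → ℝ}
    (hf : DifferentiableAt ℝ f x) (hg : DifferentiableAt ℝ g x) :
    pd i (fun y => f y * g y) x = f x * pd i g x + g x * pd i f x := by
  simp [pd, fderiv_fun_mul hf hg]

end PartialDerivatives

section NullKahler

variable {θ : (Fin 4 → ℝ) → ℝ}

@[fun_prop]
lemma contDiff_plebF (hθ : ContDiff ℝ (⊤ : ℕ∞) θ) : ContDiff ℝ (⊤ : ℕ∞) (plebF θ) := by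
  unfold plebF
  fun_prop

lemma pd_plebF (hθ : ContDiff ℝ (⊤ : ℕ∞) θ) (i : Fin 4) (x : Fin 4 → ℝ) :
    pd i (plebF θ) x = pd i (pd 1 (pd 3 θ)) x + pd i (pd 0 (pd 2 θ)) x
      + 2 * pd 2 (pd 3 θ) x * pd i (pd 2 (pd 3 θ)) x
      - (pd 2 (pd 2 θ) x * pd i (pd 3 (pd 3 θ)) x
        + pd 3 (pd 3 θ) x * pd i (pd 2 (pd 2 θ)) x) := by
  unfold plebF
  simp (disch := fun_prop) only [sq, pd_fun_sub, pd_fun_add, pd_fun_mul]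
  ring

lemma Qth_pd_y (hθ : ContDiff ℝ (⊤ : ℕ∞) θ) : Qth θ (pd 3 θ) = pd 3 (plebF θ) := by
  funext x
  rw [pd_plebF hθ]
  unfold Qth
  -- `pd_pd_comm` is a permutation lemma, so `simp` only uses it to sort mixed partials.
  simp (disch := fun_prop) only [pd_pd_comm]
  ring

lemma Qth_pd_x (hθ : ContDiff ℝ (⊤ : ℕ∞) θ) : Qth θ (pd 2 θ) = pd 2 (plebF θ) := by
  funext x
  rw [pd_plebF hθ]
  unfold Qth
  simp (disch := fun_prop) only [pd_pd_comm]
  ring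

lemma sd3rd_first_eq_zero (hθ : ContDiff ℝ (⊤ : ℕ∞) θ) (x : Fin 4 → ℝ) :
    pd 2 (Qth θ (pd 3 θ)) x - pd 3 (Qth θ (pd 2 θ)) x = 0 := by
  rw [Qth_pd_x hθ, Qth_pd_y hθ, pd_pd_comm 2 3 (contDiff_plebF hθ), sub_self]

lemma sd3rd_second_eq_Qth_plebF (hθ : ContDiff ℝ (⊤ : ℕ∞) θ) (x : Fin 4 → ℝ) :
    (pd 0 (Qth θ (pd 2 θ)) x
        - pd 3 (pd 3 θ) x * pd 2 (Qth θ (pd 2 θ)) x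
        + pd 3 (pd 2 θ) x * pd 3 (Qth θ (pd 2 θ)) x)
      + (pd 1 (Qth θ (pd 3 θ)) x
        + pd 2 (pd 3 θ) x * pd 2 (Qth θ (pd 3 θ)) x
        - pd 2 (pd 2 θ) x * pd 3 (Qth θ (pd 3 θ)) x) = Qth θ (plebF θ) x := by
  rw [Qth_pd_x hθ, Qth_pd_y hθ]
  unfold Qth
  simp (disch := fun_prop) only [pd_pd_comm]
  ring

end NullKahler

/-- Under the ansatz `F = θ_y`, `G = θ_x`, the pair `(F, G)` solves the system
(sd_3rd) iff `θ` solves the null-Kähler equation `Q(f) = 0`; moreover the first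
equation of (sd_3rd) holds identically for this ansatz. -/
theorem sd3rd_ansatz_iff_null_kahler
    (θ : (Fin 4 → ℝ) → ℝ)
    (hθ : ContDiff ℝ (⊤ : ℕ∞) θ) :
    (((∀ x : Fin 4 → ℝ,
        pd 2 (Qth θ (pd 3 θ)) x - pd 3 (Qth θ (pd 2 θ)) x = 0) ∧
      (∀ x : Fin 4 → ℝ,
        (pd 0 (Qth θ (pd 2 θ)) x
            - pd 3 (pd 3 θ) x * pd 2 (Qth θ (pd 2 θ)) x
            + pd 3 (pd 2 θ) x * pd 3 (Qth θ (pd 2 θ)) x)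
          + (pd 1 (Qth θ (pd 3 θ)) x
            + pd 2 (pd 3 θ) x * pd 2 (Qth θ (pd 3 θ)) x
            - pd 2 (pd 2 θ) x * pd 3 (Qth θ (pd 3 θ)) x) = 0)) ↔
      (∀ x : Fin 4 → ℝ, Qth θ (plebF θ) x = 0)) ∧
    (∀ x : Fin 4 → ℝ,
      pd 2 (Qth θ (pd 3 θ)) x - pd 3 (Qth θ (pd 2 θ)) x = 0) := by
  have first := sd3rd_first_eq_zero hθ
  simp only [sd3rd_second_eq_Qth_plebF hθ]
  exact ⟨⟨And.right, And.intro first⟩, first⟩
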